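/- Let λ, μ be C¹ and φ be C² on an open subset of (0,∞)×ℝ, and suppose the wave equation (W) and the field equations (E1), (E2) hold there. Define D⁺ = e^{−μ}∂_t + e^{−λ}∂_r, D⁻ = e^{−μ}∂_t − e^{−λ}∂_r, X₂ = φ̇ − e^{μ−λ}φ′, Y₂ = φ̇ + e^{μ−λ}φ′. Then D⁺X₂ = e^{μ}[k/t − 4πt(ρ−p)]X₂ − (e^{−μ}/t)Y₂ and D⁻Y₂ = −(e^{−μ}/t)X₂ + e^{μ}[k/t − 4πt(ρ−p)]Y₂. -/

import Mathlib

/-!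
Write `E = e^{μ-λ}`. Since `e^{-λ} = e^{-μ} E`, the operators are `D^± = e^{-μ}(∂_t ± E ∂_r)`.
Applying them to `X₂ = φ̇ - Eφ'` and `Y₂ = φ̇ + Eφ'`, the mixed derivatives of `φ` cancel by
symmetry of the second derivative, and (W) replaces `φ̈ - E²φ''` by first-order terms; what is left
is `D^±(φ̇ ∓ Eφ') = e^{-μ}((μ̇ - λ̇)(φ̇ ∓ Eφ') - (2/t) φ̇)`. Subtracting (E1) from (E2) gives
`e^{-μ}(μ̇ - λ̇) = e^{μ}(k/t - 4πt(ρ - p)) + e^{-μ}/t`, and `2φ̇ = X₂ + Y₂` finishes the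
computation.
-/

open Real MeasureTheory Set Filter

noncomputable section

/-- Partial derivative with respect to the first (time) variable. -/
def pt (u : ℝ → ℝ → ℝ) (t r : ℝ) : ℝ := deriv (fun s => u s r) t

/-- Partial derivative with respect to the second (space) variable. -/
def pr (u : ℝ → ℝ → ℝ) (t r : ℝ) : ℝ := deriv (fun s => u t s) r

/-- Second partial derivative in time. -/
def ptt (u : ℝ → ℝ → ℝ) (t r : ℝ) : ℝ := deriv (fun s => pt u s r) t

/-- Second partial derivative in space. -/
def prr (u : ℝ → ℝ → ℝ) (t r : ℝ) : ℝ := deriv (fun s => pr u t s) r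

/-- Vlasov contribution to the energy density. -/
def vRho (f : ℝ → ℝ → ℝ → ℝ → ℝ) (t r : ℝ) : ℝ :=
  (π / t ^ 2) * ∫ w : ℝ, ∫ F in Ioi (0 : ℝ), Real.sqrt (1 + w ^ 2 + F / t ^ 2) * f t r w F

/-- Vlasov contribution to the radial pressure. -/
def vP (f : ℝ → ℝ → ℝ → ℝ → ℝ) (t r : ℝ) : ℝ :=
  (π / t ^ 2) * ∫ w : ℝ, ∫ F in Ioi (0 : ℝ),
    (w ^ 2 / Real.sqrt (1 + w ^ 2 + F / t ^ 2)) * f t r w F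

/-- Vlasov contribution to the momentum density. -/
def vJ (f : ℝ → ℝ → ℝ → ℝ → ℝ) (t r : ℝ) : ℝ :=
  (π / t ^ 2) * ∫ w : ℝ, ∫ F in Ioi (0 : ℝ), w * f t r w F

/-- Energy density ρ of the Einstein-Vlasov-scalar field system. -/
def rho (f : ℝ → ℝ → ℝ → ℝ → ℝ) (lam mu phi : ℝ → ℝ → ℝ) (t r : ℝ) : ℝ :=
  vRho f t r + (1 / 2) * (Real.exp (-(2 * mu t r)) * (pt phi t r) ^ 2
    + Real.exp (-(2 * lam t r)) * (pr phi t r) ^ 2)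

/-- Radial pressure p of the Einstein-Vlasov-scalar field system. -/
def pres (f : ℝ → ℝ → ℝ → ℝ → ℝ) (lam mu phi : ℝ → ℝ → ℝ) (t r : ℝ) : ℝ :=
  vP f t r + (1 / 2) * (Real.exp (-(2 * mu t r)) * (pt phi t r) ^ 2
    + Real.exp (-(2 * lam t r)) * (pr phi t r) ^ 2)

/-- Momentum density j of the Einstein-Vlasov-scalar field system. -/
def mom (f : ℝ → ℝ → ℝ → ℝ → ℝ) (lam mu phi : ℝ → ℝ → ℝ) (t r : ℝ) : ℝ :=
  vJ f t r - Real.exp (-(lam t r + mu t r)) * pt phi t r * pr phi t r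

/-- A regular solution of the surface-symmetric Einstein-Vlasov-scalar field system
with curvature parameter `k` on the time interval `I ⊆ (0,∞)`. -/
structure IsRegularSolution (k : ℝ) (f : ℝ → ℝ → ℝ → ℝ → ℝ) (lam mu phi : ℝ → ℝ → ℝ)
    (I : Set ℝ) : Prop where
  f_contDiff : ContDiffOn ℝ 1 (fun q : ℝ × ℝ × ℝ × ℝ => f q.1 q.2.1 q.2.2.1 q.2.2.2)
    {q : ℝ × ℝ × ℝ × ℝ | q.1 ∈ I ∧ 0 ≤ q.2.2.2}
  f_nonneg : ∀ t ∈ I, ∀ (r w F : ℝ), 0 ≤ f t r w F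
  f_periodic : ∀ (t r w F : ℝ), f t (r + 1) w F = f t r w F
  supp_bounded : ∀ a ∈ I, ∀ b ∈ I, ∃ C : ℝ, ∀ t ∈ Icc a b, ∀ (r w F : ℝ),
    f t r w F ≠ 0 → |w| ≤ C ∧ F ≤ C
  lam_contDiff : ContDiffOn ℝ 1 (fun q : ℝ × ℝ => lam q.1 q.2) (I ×ˢ (univ : Set ℝ))
  mu_contDiff : ContDiffOn ℝ 2 (fun q : ℝ × ℝ => mu q.1 q.2) (I ×ˢ (univ : Set ℝ))
  phi_contDiff : ContDiffOn ℝ 2 (fun q : ℝ × ℝ => phi q.1 q.2) (I ×ˢ (univ : Set ℝ))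
  lam_periodic : ∀ (t r : ℝ), lam t (r + 1) = lam t r
  mu_periodic : ∀ (t r : ℝ), mu t (r + 1) = mu t r
  phi_periodic : ∀ (t r : ℝ), phi t (r + 1) = phi t r
  /-- (V): the Vlasov equation. -/
  eqV : ∀ t ∈ I, ∀ (r w F : ℝ), 0 ≤ F →
    deriv (fun s => f s r w F) t
      + (Real.exp (mu t r - lam t r) * w / Real.sqrt (1 + w ^ 2 + F / t ^ 2))
          * deriv (fun s => f t s w F) r
      - (pt lam t r * w + Real.exp (mu t r - lam t r) * pr mu t r
          * Real.sqrt (1 + w ^ 2 + F / t ^ 2)) * deriv (fun s => f t r s F) w = 0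
  /-- (E1). -/
  eqE1 : ∀ t ∈ I, ∀ r : ℝ,
    Real.exp (-(2 * mu t r)) * (2 * t * pt lam t r + 1) + k
      = 8 * π * t ^ 2 * rho f lam mu phi t r
  /-- (E2). -/
  eqE2 : ∀ t ∈ I, ∀ r : ℝ,
    Real.exp (-(2 * mu t r)) * (2 * t * pt mu t r - 1) - k
      = 8 * π * t ^ 2 * pres f lam mu phi t r
  /-- (E3). -/
  eqE3 : ∀ t ∈ I, ∀ r : ℝ,
    pr mu t r = -(4 * π * t) * Real.exp (lam t r + mu t r) * mom f lam mu phi t r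
  /-- (W): the wave equation for the scalar field. -/
  eqW : ∀ t ∈ I, ∀ r : ℝ,
    Real.exp (-(2 * lam t r)) * prr phi t r - Real.exp (-(2 * mu t r)) * ptt phi t r
      - Real.exp (-(2 * mu t r)) * (pt lam t r - pt mu t r + 2 / t) * pt phi t r
      - Real.exp (-(2 * lam t r)) * (pr lam t r - pr mu t r) * pr phi t r = 0

/-- Admissible initial data at `t = 1` for the surface-symmetric
Einstein-Vlasov-scalar field system. -/
structure IsInitialData (f0 : ℝ → ℝ → ℝ → ℝ) (lam0 mu0 phi0 psi : ℝ → ℝ) : Prop where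
  f0_contDiff : ContDiffOn ℝ 1 (fun q : ℝ × ℝ × ℝ => f0 q.1 q.2.1 q.2.2)
    {q : ℝ × ℝ × ℝ | 0 ≤ q.2.2}
  f0_nonneg : ∀ (r w F : ℝ), 0 ≤ f0 r w F
  f0_periodic : ∀ (r w F : ℝ), f0 (r + 1) w F = f0 r w F
  f0_supp : ∃ C : ℝ, ∀ (r w F : ℝ), f0 r w F ≠ 0 → |w| ≤ C ∧ F ≤ C
  lam0_C1 : ContDiff ℝ 1 lam0
  psi_C1 : ContDiff ℝ 1 psi
  mu0_C2 : ContDiff ℝ 2 mu0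
  phi0_C2 : ContDiff ℝ 2 phi0
  lam0_periodic : ∀ r : ℝ, lam0 (r + 1) = lam0 r
  mu0_periodic : ∀ r : ℝ, mu0 (r + 1) = mu0 r
  phi0_periodic : ∀ r : ℝ, phi0 (r + 1) = phi0 r
  psi_periodic : ∀ r : ℝ, psi (r + 1) = psi r
  /-- The constraint (E3) holds at `t = 1`. -/
  constraint : ∀ r : ℝ, deriv mu0 r = -(4 * π) * Real.exp (lam0 r + mu0 r) *
    (π * (∫ w : ℝ, ∫ F in Ioi (0 : ℝ), w * f0 r w F)
      - Real.exp (-(lam0 r + mu0 r)) * psi r * deriv phi0 r)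

/-- A solution attains the initial data `(f0, lam0, mu0, phi0, psi)` at `t = 1`. -/
def AttainsData (f : ℝ → ℝ → ℝ → ℝ → ℝ) (lam mu phi : ℝ → ℝ → ℝ)
    (f0 : ℝ → ℝ → ℝ → ℝ) (lam0 mu0 phi0 psi : ℝ → ℝ) : Prop :=
  (∀ (r w F : ℝ), f 1 r w F = f0 r w F) ∧ (∀ r : ℝ, lam 1 r = lam0 r) ∧
    (∀ r : ℝ, mu 1 r = mu0 r) ∧ (∀ r : ℝ, phi 1 r = phi0 r) ∧
    (∀ r : ℝ, pt phi 1 r = psi r)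

/-- A left-maximal regular solution on `(T,1]` attaining the given data at `t = 1`:
it admits no extension to a regular solution on `(T',1]` with `0 ≤ T' < T`. -/
def IsLeftMaximalSolution (k : ℝ) (f : ℝ → ℝ → ℝ → ℝ → ℝ) (lam mu phi : ℝ → ℝ → ℝ)
    (T : ℝ) (f0 : ℝ → ℝ → ℝ → ℝ) (lam0 mu0 phi0 psi : ℝ → ℝ) : Prop :=
  IsRegularSolution k f lam mu phi (Ioc T 1) ∧
  AttainsData f lam mu phi f0 lam0 mu0 phi0 psi ∧
  ∀ T' : ℝ, 0 ≤ T' → T' < T →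
    ¬ ∃ (f' : ℝ → ℝ → ℝ → ℝ → ℝ) (lam' mu' phi' : ℝ → ℝ → ℝ),
      IsRegularSolution k f' lam' mu' phi' (Ioc T' 1) ∧
      AttainsData f' lam' mu' phi' f0 lam0 mu0 phi0 psi ∧
      (∀ t ∈ Ioc T 1, ∀ (r w F : ℝ), f' t r w F = f t r w F) ∧
      (∀ t ∈ Ioc T 1, ∀ r : ℝ, lam' t r = lam t r ∧ mu' t r = mu t r ∧ phi' t r = phi t r)

open Function Topology

theorem fderiv_fderiv_apply {𝕜 E F : Type*} [NontriviallyNormedField 𝕜]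
    [NormedAddCommGroup E] [NormedSpace 𝕜 E] [NormedAddCommGroup F] [NormedSpace 𝕜 F]
    {f : E → F} {x : E} (hf : DifferentiableAt 𝕜 (fderiv 𝕜 f) x) (v w : E) :
    fderiv 𝕜 (fun y => fderiv 𝕜 f y v) x w = fderiv 𝕜 (fderiv 𝕜 f) x w v := by
  rw [fderiv_clm_apply hf (differentiableAt_const v)]
  simp

section PartialDerivatives

variable {u : ℝ → ℝ → ℝ} {t r : ℝ} {p : ℝ × ℝ} {n : ℕ}

theorem pt_eq_fderiv (hu : DifferentiableAt ℝ (uncurry u) (t, r)) :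
    pt u t r = fderiv ℝ (uncurry u) (t, r) (1, 0) := by
  have h :=
    hu.hasFDerivAt.comp_hasDerivAt t ((hasDerivAt_id t).prodMk (hasDerivAt_const t r))
  exact h.deriv

theorem pr_eq_fderiv (hu : DifferentiableAt ℝ (uncurry u) (t, r)) :
    pr u t r = fderiv ℝ (uncurry u) (t, r) (0, 1) := by
  have h :=
    hu.hasFDerivAt.comp_hasDerivAt r ((hasDerivAt_const r t).prodMk (hasDerivAt_id r))
  exact h.deriv

theorem DifferentiableAt.hasDerivAt_pt (hu : DifferentiableAt ℝ (uncurry u) (t, r)) :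
    HasDerivAt (fun s => u s r) (pt u t r) t := by
  rw [pt_eq_fderiv hu]
  exact hu.hasFDerivAt.comp_hasDerivAt t ((hasDerivAt_id t).prodMk (hasDerivAt_const t r))

theorem DifferentiableAt.hasDerivAt_pr (hu : DifferentiableAt ℝ (uncurry u) (t, r)) :
    HasDerivAt (fun y => u t y) (pr u t r) r := by
  rw [pr_eq_fderiv hu]
  exact hu.hasFDerivAt.comp_hasDerivAt r ((hasDerivAt_const r t).prodMk (hasDerivAt_id r))

theorem uncurry_pt_eventuallyEq (hu : ContDiffAt ℝ (n + 1) (uncurry u) p) :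
    uncurry (pt u) =ᶠ[𝓝 p] fun q => fderiv ℝ (uncurry u) q (1, 0) := by
  filter_upwards [hu.eventually (by simp)] with q hq
  exact pt_eq_fderiv (hq.differentiableAt (by simp))

theorem uncurry_pr_eventuallyEq (hu : ContDiffAt ℝ (n + 1) (uncurry u) p) :
    uncurry (pr u) =ᶠ[𝓝 p] fun q => fderiv ℝ (uncurry u) q (0, 1) := by
  filter_upwards [hu.eventually (by simp)] with q hq
  exact pr_eq_fderiv (hq.differentiableAt (by simp))

theorem ContDiffAt.uncurry_pt (hu : ContDiffAt ℝ (n + 1) (uncurry u) p) :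
    ContDiffAt ℝ n (uncurry (pt u)) p :=
  ((hu.fderiv_right le_rfl).clm_apply (contDiffAt_const (c := (1, 0)))).congr_of_eventuallyEq
    (uncurry_pt_eventuallyEq hu)

theorem ContDiffAt.uncurry_pr (hu : ContDiffAt ℝ (n + 1) (uncurry u) p) :
    ContDiffAt ℝ n (uncurry (pr u)) p :=
  ((hu.fderiv_right le_rfl).clm_apply (contDiffAt_const (c := (0, 1)))).congr_of_eventuallyEq
    (uncurry_pr_eventuallyEq hu)

theorem pr_pt_eq_pt_pr (hu : ContDiffAt ℝ 2 (uncurry u) (t, r)) :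
    pr (pt u) t r = pt (pr u) t r := by
  have hd : DifferentiableAt ℝ (fderiv ℝ (uncurry u)) (t, r) :=
    (hu.fderiv_right (m := 1) le_rfl).differentiableAt one_ne_zero
  rw [pr_eq_fderiv ((hu.uncurry_pt (n := 1)).differentiableAt one_ne_zero),
    pt_eq_fderiv ((hu.uncurry_pr (n := 1)).differentiableAt one_ne_zero),
    (uncurry_pt_eventuallyEq (n := 1) hu).fderiv_eq,
    (uncurry_pr_eventuallyEq (n := 1) hu).fderiv_eq,
    fderiv_fderiv_apply hd, fderiv_fderiv_apply hd]
  exact hu.isSymmSndFDerivAt (by simp) _ _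

end PartialDerivatives

section Characteristics

variable {lam mu phi : ℝ → ℝ → ℝ} {t r : ℝ}

theorem hasDerivAt_pt_exp_sub_mul {u : ℝ → ℝ → ℝ}
    (hlam : DifferentiableAt ℝ (uncurry lam) (t, r))
    (hmu : DifferentiableAt ℝ (uncurry mu) (t, r)) (hu : DifferentiableAt ℝ (uncurry u) (t, r)) :
    HasDerivAt (fun s => exp (mu s r - lam s r) * u s r)
      (exp (mu t r - lam t r) * (pt mu t r - pt lam t r) * u t r
        + exp (mu t r - lam t r) * pt u t r) t :=
  (hmu.hasDerivAt_pt.sub hlam.hasDerivAt_pt).exp.mul hu.hasDerivAt_pt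

theorem hasDerivAt_pr_exp_sub_mul {u : ℝ → ℝ → ℝ}
    (hlam : DifferentiableAt ℝ (uncurry lam) (t, r))
    (hmu : DifferentiableAt ℝ (uncurry mu) (t, r)) (hu : DifferentiableAt ℝ (uncurry u) (t, r)) :
    HasDerivAt (fun y => exp (mu t y - lam t y) * u t y)
      (exp (mu t r - lam t r) * (pr mu t r - pr lam t r) * u t r
        + exp (mu t r - lam t r) * pr u t r) r :=
  (hmu.hasDerivAt_pr.sub hlam.hasDerivAt_pr).exp.mul hu.hasDerivAt_pr

theorem ptt_sub_exp_sq_mul_prr_of_wave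
    (hW : exp (-(2 * lam t r)) * prr phi t r - exp (-(2 * mu t r)) * ptt phi t r
      - exp (-(2 * mu t r)) * (pt lam t r - pt mu t r + 2 / t) * pt phi t r
      - exp (-(2 * lam t r)) * (pr lam t r - pr mu t r) * pr phi t r = 0) :
    ptt phi t r - exp (mu t r - lam t r) ^ 2 * prr phi t r
      = (pt mu t r - pt lam t r - 2 / t) * pt phi t r
        + exp (mu t r - lam t r) ^ 2 * (pr mu t r - pr lam t r) * pr phi t r := by
  have h2 : exp (mu t r - lam t r) ^ 2 = exp (2 * mu t r) * exp (-(2 * lam t r)) := by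
    rw [← exp_nat_mul, ← exp_add]; push_cast; ring_nf
  have h1 : exp (2 * mu t r) * exp (-(2 * mu t r)) = 1 := by rw [← exp_add]; simp
  rw [h2]
  linear_combination (-exp (2 * mu t r)) * hW
    - (ptt phi t r + (pt lam t r - pt mu t r + 2 / t) * pt phi t r) * h1

theorem exp_neg_mul_pt_sub_add_exp_mul_pr_sub
    (hlam : DifferentiableAt ℝ (uncurry lam) (t, r))
    (hmu : DifferentiableAt ℝ (uncurry mu) (t, r)) (hphi : ContDiffAt ℝ 2 (uncurry phi) (t, r))
    (hW : ptt phi t r - exp (mu t r - lam t r) ^ 2 * prr phi t r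
      = (pt mu t r - pt lam t r - 2 / t) * pt phi t r
        + exp (mu t r - lam t r) ^ 2 * (pr mu t r - pr lam t r) * pr phi t r) :
    exp (-mu t r) * pt (fun s y => pt phi s y - exp (mu s y - lam s y) * pr phi s y) t r
      + exp (-lam t r) * pr (fun s y => pt phi s y - exp (mu s y - lam s y) * pr phi s y) t r
      = exp (-mu t r) * ((pt mu t r - pt lam t r)
          * (pt phi t r - exp (mu t r - lam t r) * pr phi t r) - 2 / t * pt phi t r) := by
  have hphi_t := (hphi.uncurry_pt (n := 1)).differentiableAt one_ne_zero
  have hphi_r := (hphi.uncurry_pr (n := 1)).differentiableAt one_ne_zero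
  have hpt : pt (fun s y => pt phi s y - exp (mu s y - lam s y) * pr phi s y) t r = _ :=
    (hphi_t.hasDerivAt_pt.sub (hasDerivAt_pt_exp_sub_mul hlam hmu hphi_r)).deriv
  have hpr : pr (fun s y => pt phi s y - exp (mu s y - lam s y) * pr phi s y) t r = _ :=
    (hphi_t.hasDerivAt_pr.sub (hasDerivAt_pr_exp_sub_mul hlam hmu hphi_r)).deriv
  have hexp : exp (-lam t r) = exp (-mu t r) * exp (mu t r - lam t r) := by
    rw [← exp_add]; ring_nf
  rw [hpt, hpr, pr_pt_eq_pt_pr hphi, hexp, show pt (pt phi) = ptt phi from rfl,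
    show pr (pr phi) = prr phi from rfl]
  linear_combination exp (-mu t r) * hW

theorem exp_neg_mul_pt_add_sub_exp_mul_pr_add
    (hlam : DifferentiableAt ℝ (uncurry lam) (t, r))
    (hmu : DifferentiableAt ℝ (uncurry mu) (t, r)) (hphi : ContDiffAt ℝ 2 (uncurry phi) (t, r))
    (hW : ptt phi t r - exp (mu t r - lam t r) ^ 2 * prr phi t r
      = (pt mu t r - pt lam t r - 2 / t) * pt phi t r
        + exp (mu t r - lam t r) ^ 2 * (pr mu t r - pr lam t r) * pr phi t r) :
    exp (-mu t r) * pt (fun s y => pt phi s y + exp (mu s y - lam s y) * pr phi s y) t r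
      - exp (-lam t r) * pr (fun s y => pt phi s y + exp (mu s y - lam s y) * pr phi s y) t r
      = exp (-mu t r) * ((pt mu t r - pt lam t r)
          * (pt phi t r + exp (mu t r - lam t r) * pr phi t r) - 2 / t * pt phi t r) := by
  have hphi_t := (hphi.uncurry_pt (n := 1)).differentiableAt one_ne_zero
  have hphi_r := (hphi.uncurry_pr (n := 1)).differentiableAt one_ne_zero
  have hpt : pt (fun s y => pt phi s y + exp (mu s y - lam s y) * pr phi s y) t r = _ :=
    (hphi_t.hasDerivAt_pt.add (hasDerivAt_pt_exp_sub_mul hlam hmu hphi_r)).deriv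
  have hpr : pr (fun s y => pt phi s y + exp (mu s y - lam s y) * pr phi s y) t r = _ :=
    (hphi_t.hasDerivAt_pr.add (hasDerivAt_pr_exp_sub_mul hlam hmu hphi_r)).deriv
  have hexp : exp (-lam t r) = exp (-mu t r) * exp (mu t r - lam t r) := by
    rw [← exp_add]; ring_nf
  rw [hpt, hpr, pr_pt_eq_pt_pr hphi, hexp, show pt (pt phi) = ptt phi from rfl,
    show pr (pr phi) = prr phi from rfl]
  linear_combination exp (-mu t r) * hW

end Characteristics

theorem exp_neg_mul_sub_of_field_eqs {k t μ dlam dmu ρ p : ℝ} (ht : t ≠ 0)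
    (hE1 : exp (-(2 * μ)) * (2 * t * dlam + 1) + k = 8 * π * t ^ 2 * ρ)
    (hE2 : exp (-(2 * μ)) * (2 * t * dmu - 1) - k = 8 * π * t ^ 2 * p) :
    exp (-μ) * (dmu - dlam) = exp μ * (k / t - 4 * π * t * (ρ - p)) + exp (-μ) / t := by
  have h2 : exp (-(2 * μ)) = exp (-μ) ^ 2 := by rw [← exp_nat_mul]; ring_nf
  have h1 : exp μ * exp (-μ) = 1 := by rw [← exp_add]; simp
  rw [h2] at hE1 hE2
  field_simp
  linear_combination (exp μ / 2) * (hE2 - hE1)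
    - exp (-μ) * (t * dmu - t * dlam - 1) * h1

theorem stmt2_general (k : ℝ)
    (U : Set (ℝ × ℝ)) (hU : IsOpen U) (hUpos : ∀ q ∈ U, 0 < q.1)
    (f : ℝ → ℝ → ℝ → ℝ → ℝ) (lam mu phi : ℝ → ℝ → ℝ)
    (hlam : ContDiffOn ℝ 1 (fun q : ℝ × ℝ => lam q.1 q.2) U)
    (hmu : ContDiffOn ℝ 1 (fun q : ℝ × ℝ => mu q.1 q.2) U)
    (hphi : ContDiffOn ℝ 2 (fun q : ℝ × ℝ => phi q.1 q.2) U)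
    (hW : ∀ q ∈ U,
      Real.exp (-(2 * lam q.1 q.2)) * prr phi q.1 q.2
        - Real.exp (-(2 * mu q.1 q.2)) * ptt phi q.1 q.2
        - Real.exp (-(2 * mu q.1 q.2)) * (pt lam q.1 q.2 - pt mu q.1 q.2 + 2 / q.1)
            * pt phi q.1 q.2
        - Real.exp (-(2 * lam q.1 q.2)) * (pr lam q.1 q.2 - pr mu q.1 q.2)
            * pr phi q.1 q.2 = 0)
    (hE1 : ∀ q ∈ U,
      Real.exp (-(2 * mu q.1 q.2)) * (2 * q.1 * pt lam q.1 q.2 + 1) + k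
        = 8 * π * q.1 ^ 2 * rho f lam mu phi q.1 q.2)
    (hE2 : ∀ q ∈ U,
      Real.exp (-(2 * mu q.1 q.2)) * (2 * q.1 * pt mu q.1 q.2 - 1) - k
        = 8 * π * q.1 ^ 2 * pres f lam mu phi q.1 q.2) :
    let X2 : ℝ → ℝ → ℝ := fun t r => pt phi t r - Real.exp (mu t r - lam t r) * pr phi t r
    let Y2 : ℝ → ℝ → ℝ := fun t r => pt phi t r + Real.exp (mu t r - lam t r) * pr phi t r
    ∀ q ∈ U,
      (Real.exp (-(mu q.1 q.2)) * pt X2 q.1 q.2 + Real.exp (-(lam q.1 q.2)) * pr X2 q.1 q.2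
        = Real.exp (mu q.1 q.2) * (k / q.1
            - 4 * π * q.1 * (rho f lam mu phi q.1 q.2 - pres f lam mu phi q.1 q.2))
              * X2 q.1 q.2
          - Real.exp (-(mu q.1 q.2)) / q.1 * Y2 q.1 q.2) ∧
      (Real.exp (-(mu q.1 q.2)) * pt Y2 q.1 q.2 - Real.exp (-(lam q.1 q.2)) * pr Y2 q.1 q.2
        = -(Real.exp (-(mu q.1 q.2)) / q.1) * X2 q.1 q.2
          + Real.exp (mu q.1 q.2) * (k / q.1
              - 4 * π * q.1 * (rho f lam mu phi q.1 q.2 - pres f lam mu phi q.1 q.2))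
                * Y2 q.1 q.2) := by
  dsimp only
  intro q hq
  have ht : q.1 ≠ 0 := (hUpos q hq).ne'
  have hq' := hU.mem_nhds hq
  have hphiq : ContDiffAt ℝ 2 (uncurry phi) q := hphi.contDiffAt hq'
  have hlamq : DifferentiableAt ℝ (uncurry lam) q :=
    (hlam.contDiffAt hq').differentiableAt one_ne_zero
  have hmuq : DifferentiableAt ℝ (uncurry mu) q :=
    (hmu.contDiffAt hq').differentiableAt one_ne_zero
  have hrate := exp_neg_mul_sub_of_field_eqs ht (hE1 q hq) (hE2 q hq)
  constructor
  · rw [exp_neg_mul_pt_sub_add_exp_mul_pr_sub hlamq hmuq hphiq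
      (ptt_sub_exp_sq_mul_prr_of_wave (hW q hq))]
    linear_combination (pt phi q.1 q.2 - exp (mu q.1 q.2 - lam q.1 q.2) * pr phi q.1 q.2) * hrate
  · rw [exp_neg_mul_pt_add_sub_exp_mul_pr_add hlamq hmuq hphiq
      (ptt_sub_exp_sq_mul_prr_of_wave (hW q hq))]
    linear_combination (pt phi q.1 q.2 + exp (mu q.1 q.2 - lam q.1 q.2) * pr phi q.1 q.2) * hrate

/-- Lemma 2.2, second part: on an open subset of `(0,∞) × ℝ` where
the wave equation (W) and the field equations (E1), (E2) hold, the quantities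
`X₂ = φ̇ − e^{μ−λ}φ′` and `Y₂ = φ̇ + e^{μ−λ}φ′` satisfy
`D⁺X₂ = e^{μ}[k/t − 4πt(ρ−p)]X₂ − (e^{−μ}/t)Y₂` and
`D⁻Y₂ = −(e^{−μ}/t)X₂ + e^{μ}[k/t − 4πt(ρ−p)]Y₂`. -/
theorem stmt2 (k : ℝ) (hk : k = -1 ∨ k = 0 ∨ k = 1)
    (U : Set (ℝ × ℝ)) (hU : IsOpen U) (hUpos : ∀ q ∈ U, 0 < q.1)
    (f : ℝ → ℝ → ℝ → ℝ → ℝ) (lam mu phi : ℝ → ℝ → ℝ)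
    (hlam : ContDiffOn ℝ 1 (fun q : ℝ × ℝ => lam q.1 q.2) U)
    (hmu : ContDiffOn ℝ 1 (fun q : ℝ × ℝ => mu q.1 q.2) U)
    (hphi : ContDiffOn ℝ 2 (fun q : ℝ × ℝ => phi q.1 q.2) U)
    (hW : ∀ q ∈ U,
      Real.exp (-(2 * lam q.1 q.2)) * prr phi q.1 q.2
        - Real.exp (-(2 * mu q.1 q.2)) * ptt phi q.1 q.2
        - Real.exp (-(2 * mu q.1 q.2)) * (pt lam q.1 q.2 - pt mu q.1 q.2 + 2 / q.1)
            * pt phi q.1 q.2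
        - Real.exp (-(2 * lam q.1 q.2)) * (pr lam q.1 q.2 - pr mu q.1 q.2)
            * pr phi q.1 q.2 = 0)
    (hE1 : ∀ q ∈ U,
      Real.exp (-(2 * mu q.1 q.2)) * (2 * q.1 * pt lam q.1 q.2 + 1) + k
        = 8 * π * q.1 ^ 2 * rho f lam mu phi q.1 q.2)
    (hE2 : ∀ q ∈ U,
      Real.exp (-(2 * mu q.1 q.2)) * (2 * q.1 * pt mu q.1 q.2 - 1) - k
        = 8 * π * q.1 ^ 2 * pres f lam mu phi q.1 q.2) :
    let X2 : ℝ → ℝ → ℝ := fun t r => pt phi t r - Real.exp (mu t r - lam t r) * pr phi t r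
    let Y2 : ℝ → ℝ → ℝ := fun t r => pt phi t r + Real.exp (mu t r - lam t r) * pr phi t r
    ∀ q ∈ U,
      (Real.exp (-(mu q.1 q.2)) * pt X2 q.1 q.2 + Real.exp (-(lam q.1 q.2)) * pr X2 q.1 q.2
        = Real.exp (mu q.1 q.2) * (k / q.1
            - 4 * π * q.1 * (rho f lam mu phi q.1 q.2 - pres f lam mu phi q.1 q.2))
              * X2 q.1 q.2
          - Real.exp (-(mu q.1 q.2)) / q.1 * Y2 q.1 q.2) ∧
      (Real.exp (-(mu q.1 q.2)) * pt Y2 q.1 q.2 - Real.exp (-(lam q.1 q.2)) * pr Y2 q.1 q.2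
        = -(Real.exp (-(mu q.1 q.2)) / q.1) * X2 q.1 q.2
          + Real.exp (mu q.1 q.2) * (k / q.1
              - 4 * π * q.1 * (rho f lam mu phi q.1 q.2 - pres f lam mu phi q.1 q.2))
                * Y2 q.1 q.2) :=
  stmt2_general k U hU hUpos f lam mu phi hlam hmu hphi hW hE1 hE2
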